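/- Let x₁₃ := a·b·c²·(a² + c²) ∈ S. Then x₁₃ ∉ J, and for every integer m ≥ 1 one has D_m(x₁₃) ∈ J; that is, the image of x₁₃ in N = S ⧸ J is a nonzero element annihilated by all the Milnor operations D_m, m ≥ 1. (This is the algebraic content of the counterexample: x₁₃ corresponds to a nonzero degree-13 class in H*(BG; ℤ/2), G = Sp(1)³/Γ₂, with Q_m x₁₃ = 0 for all m ≥ 1.) -/

import Mathlib

open MvPolynomial

/-- `S = ℤ/2[a,b,c,d] ≅ H^*(BSO(3)²; ℤ/2)` with `a = w₂'`, `b = w₃'`, `c = w₂''`, `d = w₃''`. -/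
noncomputable abbrev S : Type := MvPolynomial (Fin 4) (ZMod 2)

noncomputable def a : S := X 0
noncomputable def b : S := X 1
noncomputable def c : S := X 2
noncomputable def d : S := X 3

/-- The ideal `J = (a·d + c·b, b·d² + b²·d)` of relations. -/
noncomputable def J : Ideal S := Ideal.span {a * d + c * b, b * d ^ 2 + b ^ 2 * d}

/-- `N = S ⧸ J`, the bottom line of the `E_∞`-term. -/
noncomputable abbrev N : Type := S ⧸ J

/-- The quotient map `π : S → N`. -/
noncomputable def π : S →+* N := Ideal.Quotient.mk J

/-- Values of the Milnor operations `D_m` on the generators `a, b, c, d`: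
`D₀ = Q₀` with `D₀(a)=b, D₀(b)=0, D₀(c)=d, D₀(d)=0`;
`D₁ = Q₁` with `D₁(a)=ab, D₁(b)=b², D₁(c)=cd, D₁(d)=d²`;
and for `m ≥ 2`, `D_m = a^(2^(m−1))·D_{m−1} + b^(2^(m−1))·D_{m−2}` on `a, b`,
and `D_m = c^(2^(m−1))·D_{m−1} + d^(2^(m−1))·D_{m−2}` on `c, d`. -/
noncomputable def Dvals : ℕ → Fin 4 → S
  | 0 => ![b, 0, d, 0]
  | 1 => ![a * b, b ^ 2, c * d, d ^ 2]
  | m + 2 => fun i =>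
      if (i : ℕ) < 2 then
        a ^ 2 ^ (m + 1) * Dvals (m + 1) i + b ^ 2 ^ (m + 1) * Dvals m i
      else
        c ^ 2 ^ (m + 1) * Dvals (m + 1) i + d ^ 2 ^ (m + 1) * Dvals m i

/-- The `m`-th Milnor operation `D_m` on `S ≅ H^*(BSO(3)²; ℤ/2)`, as a derivation. -/
noncomputable def D (m : ℕ) : Derivation (ZMod 2) S S :=
  MvPolynomial.mkDerivation (ZMod 2) (Dvals m)

/-!
Since `c²(a² + c²) = (c(a + c))²` and derivations kill squares in characteristic 2,
`D_m(x₁₃) = D_m(ab) · c²(a² + c²)`. The elements `D_m(ab)` obey the recursion defining `D_m` on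
`a, b`, starting from `D₁(ab) = 0` and `D₂(ab) = b⁴`, so `b⁴ ∣ D_m(ab)` for `m ≥ 1`, and
`b⁴c²(a² + c²) ∈ J`. On the other hand the functional `coeff_{a³bc²} + coeff_{a⁴cd}` vanishes on
`J` and takes the value `1` at `x₁₃`.
-/

section CharTwo

variable {R A : Type*} [CommSemiring R] [CommRing A] [Algebra R A] [CharP A 2]

theorem Derivation.map_sq_eq_zero (D : Derivation R A A) (x : A) : D (x ^ 2) = 0 := by
  rw [D.leibniz_pow, show (2 : ℕ) • (x ^ (2 - 1) • D x) = (2 : A) * (x * D x) by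
    simp [nsmul_eq_mul, smul_eq_mul], CharTwo.two_eq_zero, zero_mul]

theorem Derivation.map_mul_sq (D : Derivation R A A) (x y : A) :
    D (x * y ^ 2) = D x * y ^ 2 := by
  simp [D.leibniz, D.map_sq_eq_zero, mul_comm]

end CharTwo

theorem Ideal.mem_of_linear_recurrence {R : Type*} [CommSemiring R] {I : Ideal R}
    {u α β : ℕ → R} (hrec : ∀ n, u (n + 2) = α n * u (n + 1) + β n * u n)
    (h0 : u 0 ∈ I) (h1 : u 1 ∈ I) (n : ℕ) : u n ∈ I := by
  induction n using Nat.twoStepInduction with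
  | zero => exact h0
  | one => exact h1
  | more n hn hn1 => rw [hrec]; exact I.add_mem (I.mul_mem_left _ hn1) (I.mul_mem_left _ hn)

theorem D_X (m : ℕ) (i : Fin 4) : D m (X i) = Dvals m i := mkDerivation_X _ _ _

theorem D_add_two_ab (m : ℕ) :
    D (m + 2) (a * b) = a ^ 2 ^ (m + 1) * D (m + 1) (a * b) + b ^ 2 ^ (m + 1) * D m (a * b) := by
  simp only [Derivation.leibniz, smul_eq_mul, a, b, D_X, Dvals]
  norm_num
  ring

theorem D_one_ab : D 1 (a * b) = 0 := by
  simp only [Derivation.leibniz, smul_eq_mul, a, b, D_X, Dvals]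
  norm_num
  linear_combination (X 0 * X 1 ^ 2 : S) * CharTwo.two_eq_zero (R := S)

theorem D_two_ab : D 2 (a * b) = b ^ 4 := by
  simp only [Derivation.leibniz, smul_eq_mul, a, b, D_X, Dvals]
  norm_num
  linear_combination (X 0 ^ 3 * X 1 ^ 2 : S) * CharTwo.two_eq_zero (R := S)

theorem D_succ_ab_mem_span (m : ℕ) : D (m + 1) (a * b) ∈ Ideal.span {b ^ 4} :=
  Ideal.mem_of_linear_recurrence (u := fun n ↦ D (n + 1) (a * b)) (fun n ↦ D_add_two_ab (n + 1))
    (by rw [D_one_ab]; exact Ideal.zero_mem _)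
    (by rw [D_two_ab]; exact Ideal.mem_span_singleton_self _) m

theorem D_x₁₃ (m : ℕ) :
    D m (a * b * c ^ 2 * (a ^ 2 + c ^ 2)) = D m (a * b) * (c ^ 2 * (a ^ 2 + c ^ 2)) := by
  have hsq : c ^ 2 * (a ^ 2 + c ^ 2) = (c * (a + c)) ^ 2 := by
    linear_combination (-a * c ^ 3) * CharTwo.two_eq_zero (R := S)
  rw [mul_assoc (a * b), hsq, Derivation.map_mul_sq]

/-- Modulo `J`, `bc ≡ ad` turns `b⁴c²(a² + c²)` into `a⁴d²(b + d)²`, and once more into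
`a³c(b + d) · bd(b + d)`. -/
theorem b_pow_four_mul_mem_J : b ^ 4 * (c ^ 2 * (a ^ 2 + c ^ 2)) ∈ J := by
  refine Ideal.mem_span_pair.mpr ⟨b ^ 3 * c ^ 3 + a * b ^ 2 * c ^ 2 * d + a ^ 2 * b ^ 2 * c * d
    + a ^ 2 * b ^ 3 * c, a ^ 2 * b * c ^ 2 + a ^ 3 * b * c, ?_⟩
  linear_combination (a * b ^ 3 * c ^ 3 * d + a ^ 2 * b ^ 2 * c ^ 2 * d ^ 2
    + a ^ 3 * b ^ 2 * c * d ^ 2 + a ^ 2 * b ^ 3 * c ^ 2 * d + a ^ 3 * b ^ 3 * c * d)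
      * CharTwo.two_eq_zero (R := S)

theorem MvPolynomial.coeff_mul_X_of_apply_eq_zero {σ R : Type*} [CommSemiring R] {m : σ →₀ ℕ}
    {i : σ} (h : m i = 0) (p : MvPolynomial σ R) : coeff m (p * X i) = 0 := by
  classical
  rw [coeff_mul_X', if_neg (by simpa using h)]

section Exponents

open Finsupp

-- The exponents of `a³bc²` and `a⁴cd`, each written as that of `a³c` times a quadratic monomial.
noncomputable def expA3BC2 : Fin 4 →₀ ℕ := single 0 3 + single 2 1 + single 2 1 + single 1 1

noncomputable def expA4CD : Fin 4 →₀ ℕ := single 0 3 + single 2 1 + single 0 1 + single 3 1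

end Exponents

/-- Multiplying by `ad + cb` puts the coefficient of `a³c` at both `a³bc²` and `a⁴cd`, and every
multiple of `bd(b + d)` is divisible by `b` and `d`, whereas `a³bc²` has no `d` and `a⁴cd` no `b`. -/
theorem coeff_add_coeff_eq_zero_of_mem_J {p : S} (hp : p ∈ J) :
    coeff expA3BC2 p + coeff expA4CD p = 0 := by
  obtain ⟨f, g, rfl⟩ := Ideal.mem_span_pair.mp hp
  have r₁ : f * (a * d + c * b) = f * X 0 * X 3 + f * X 2 * X 1 := by simp only [a, b, c, d]; ring
  have r₂ : g * (b * d ^ 2 + b ^ 2 * d) = g * b * (d + b) * X 3 := by simp only [b, d]; ring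
  have r₂' : g * (b * d ^ 2 + b ^ 2 * d) = g * d * (d + b) * X 1 := by simp only [b, d]; ring
  have h₁ : coeff expA3BC2 (f * X 0 * X 3) = 0 :=
    coeff_mul_X_of_apply_eq_zero (by simp [expA3BC2]) _
  have h₂ : coeff expA4CD (f * X 2 * X 1) = 0 :=
    coeff_mul_X_of_apply_eq_zero (by simp [expA4CD]) _
  have h₃ : coeff expA3BC2 (g * (b * d ^ 2 + b ^ 2 * d)) = 0 := by
    rw [r₂]; exact coeff_mul_X_of_apply_eq_zero (by simp [expA3BC2]) _
  have h₄ : coeff expA4CD (g * (b * d ^ 2 + b ^ 2 * d)) = 0 := by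
    rw [r₂']; exact coeff_mul_X_of_apply_eq_zero (by simp [expA4CD]) _
  simp only [coeff_add, r₁, h₁, h₂, h₃, h₄, add_zero, zero_add]
  rw [expA3BC2, expA4CD, coeff_mul_X, coeff_mul_X, coeff_mul_X, coeff_mul_X,
    CharTwo.add_self_eq_zero]

theorem coeff_x₁₃ :
    coeff expA3BC2 (a * b * c ^ 2 * (a ^ 2 + c ^ 2))
      + coeff expA4CD (a * b * c ^ 2 * (a ^ 2 + c ^ 2)) = 1 := by
  classical
  have h₁ : coeff expA3BC2 (a * b * c ^ 2 * (a ^ 2 + c ^ 2)) = 1 := by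
    rw [show a * b * c ^ 2 * (a ^ 2 + c ^ 2) = (X 0 ^ 3 + X 0 * X 2 * X 2) * X 2 * X 2 * X 1 by
      simp only [a, b, c]; ring, expA3BC2]
    simp only [coeff_mul_X, coeff_add]
    rw [coeff_mul_X_of_apply_eq_zero (by simp)]
    simp [coeff_X_pow]
  have h₂ : coeff expA4CD (a * b * c ^ 2 * (a ^ 2 + c ^ 2)) = 0 := by
    rw [show a * b * c ^ 2 * (a ^ 2 + c ^ 2) = a * c ^ 2 * (a ^ 2 + c ^ 2) * X 1 by
      simp only [b]; ring]
    exact coeff_mul_X_of_apply_eq_zero (by simp [expA4CD]) _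
  rw [h₁, h₂, add_zero]

theorem stmt_14 :
    a * b * c ^ 2 * (a ^ 2 + c ^ 2) ∉ J ∧
    ∀ m : ℕ, 1 ≤ m → D m (a * b * c ^ 2 * (a ^ 2 + c ^ 2)) ∈ J := by
  refine ⟨fun h ↦ by simpa [coeff_x₁₃] using coeff_add_coeff_eq_zero_of_mem_J h, ?_⟩
  rintro (_ | m) hm
  · exact absurd hm (by norm_num)
  obtain ⟨s, hs⟩ := Ideal.mem_span_singleton'.mp (D_succ_ab_mem_span m)
  rw [D_x₁₃, ← hs, mul_assoc]
  exact J.mul_mem_left s b_pow_four_mul_mem_J
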